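/- arXiv:math/0311430 — 5 statements merged into one kernel-verified Lean document; each statement's English description precedes it below -/
import Mathlib

section
/- If L is a finite meet-semilattice and X an element of L \ {0̂}, then the combinatorial blowup Bl_X(L) is again a meet-semilattice. -/
open scoped BigOperators

variable {L : Type*}

/-- The set of maximal elements of `G` below `X` (the `G`-factors of `X`). -/
def factorsSet [PartialOrder L] (G : Set L) (X : L) : Set L :=
  {g | g ∈ G ∧ g ≤ X ∧ ∀ h ∈ G, h ≤ X → g ≤ h → g = h}

/-- `G` is a building set in the meet-semilattice `L` with minimal element `⊥`:
every element of `G` is nonminimal, and for every `X ≠ ⊥` there is a poset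
isomorphism from the product of the lower intervals of the factors of `X`
to the lower interval of `X`, sending the `g`-th "unit vector" to `g`. -/
def IsBuilding (L : Type*) [PartialOrder L] [OrderBot L] (G : Set L) : Prop :=
  (∀ g ∈ G, g ≠ ⊥) ∧
  ∀ X : L, X ≠ ⊥ →
    ∃ φ : ((g : factorsSet G X) → Set.Icc (⊥ : L) g.1) ≃o Set.Icc (⊥ : L) X,
      ∀ (g : factorsSet G X) (u : (h : factorsSet G X) → Set.Icc (⊥ : L) h.1),
        (u g : L) = g.1 → (∀ h, h ≠ g → (u h : L) = (⊥ : L)) → ((φ u : L) = g.1)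

/-- A finite subset `S ⊆ G` is nested: every antichain in `S` of size at least 2
has a least upper bound in `L` which does not belong to `G`. -/
def IsNested [PartialOrder L] (G : Set L) (S : Finset L) : Prop :=
  ↑S ⊆ G ∧ ∀ A : Finset L, A ⊆ S → IsAntichain (· ≤ ·) (A : Set L) → 2 ≤ A.card →
    ∃ j, IsLUB (A : Set L) j ∧ j ∉ G

/-- The nested set complex, as the collection of its faces. -/
def nestedComplex [PartialOrder L] (G : Set L) : Set (Finset L) := {S | IsNested G S}

/-- The order complex of a poset: the collection of finite chains. -/
def chainComplex (V : Type*) [Preorder V] : Set (Finset V) :=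
  {S | IsChain (· ≤ ·) (S : Set V)}

/-- The order complex of `L \ {⊥}`, with vertex set inside `L`. -/
def orderComplexBot (L : Type*) [PartialOrder L] [OrderBot L] : Set (Finset L) :=
  {S | (S : Set L) ⊆ {x | x ≠ ⊥} ∧ IsChain (· ≤ ·) (S : Set L)}

/-- Geometric realization of an abstract simplicial complex (given by its set of
faces, as finsets of the vertex type `V`): convex combinations of vertices
supported on a face. -/
abbrev geomReal {V : Type*} (K : Set (Finset V)) : Type _ :=
  {f : V → ℝ // (∀ v, 0 ≤ f v) ∧ ∃ s ∈ K, (∀ v, f v ≠ 0 → v ∈ s) ∧ ∑ v ∈ s, f v = 1}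

/-- The subposet of the face poset of the nested set complex consisting of the
nonempty nested sets whose join is `≤ X`. -/
def NestedFiber [PartialOrder L] (G : Set L) (X : L) :=
  {S : Finset L // IsNested G S ∧ S.Nonempty ∧ ∃ j, IsLUB (S : Set L) j ∧ j ≤ X}

instance [PartialOrder L] (G : Set L) (X : L) : PartialOrder (NestedFiber G X) := by
  unfold NestedFiber; infer_instance

/-- The face poset of the nested set complex: nonempty nested sets ordered by inclusion. -/
def NestedFaces [PartialOrder L] (G : Set L) :=
  {S : Finset L // IsNested G S ∧ S.Nonempty}

instance [PartialOrder L] (G : Set L) : PartialOrder (NestedFaces G) := by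
  unfold NestedFaces; infer_instance

/-- The combinatorial blowup of a poset `M` at `X`: elements `Y` (marked `false`)
with `Y ≱ X`, and elements `Ŷ` (marked `true`) with `Y ≱ X` such that `Y ∨ X`
exists; ordered by `Y ≺ Z` iff `Y < Z`, `Ŷ ≺ Ẑ` iff `Y < Z`, `Y ≺ Ẑ` iff `Y ≤ Z`. -/
def Bl {M : Type*} [PartialOrder M] (X : M) :=
  {p : M × Bool // ¬ X ≤ p.1 ∧ (p.2 = true → ∃ j, IsLUB {p.1, X} j)}

noncomputable instance {M : Type*} [PartialOrder M] (X : M) : PartialOrder (Bl X) := by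
  unfold Bl; infer_instance

/-- The atoms of `L`, used as coordinates for the realization of nested set fans. -/
def Atoms (L : Type*) [PartialOrder L] [OrderBot L] := {a : L // IsAtom a}

open Classical in
/-- The characteristic vector of the set of atoms below `X`. -/
noncomputable def charVec [PartialOrder L] [OrderBot L] (X : L) : Atoms L → ℝ :=
  fun a => if a.1 ≤ X then 1 else 0

/-- The polyhedral cone spanned by the characteristic vectors of elements of `S`. -/
noncomputable def coneOf [PartialOrder L] [OrderBot L] (S : Finset L) : Set (Atoms L → ℝ) :=
  {y | ∃ c : L → ℝ, (∀ x, 0 ≤ c x) ∧ y = ∑ x ∈ S, c x • charVec x}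

/-- The fan associated to a building set: the cones spanned by the nested sets. -/
def fanOf [PartialOrder L] [OrderBot L] (G : Set L) : Set (Set (Atoms L → ℝ)) :=
  {C | ∃ S : Finset L, IsNested G S ∧ C = coneOf S}

/-- The cone generated by a ray `v` together with a cone `c`. -/
def rayJoin {E : Type*} [AddCommMonoid E] [Module ℝ E] (v : E) (c : Set E) : Set E :=
  {y | ∃ a : ℝ, ∃ x ∈ c, 0 ≤ a ∧ y = a • v + x}

/-- The stellar subdivision of a fan `F` at the cone `σ` with new ray `v`:
cones not containing `σ` are kept, and each cone `τ ⊇ σ` is replaced by the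
joins of `v` with the faces of `τ` not containing `σ`. -/
def stellarSub {E : Type*} [AddCommMonoid E] [Module ℝ E]
    (F : Set (Set E)) (σ : Set E) (v : E) : Set (Set E) :=
  {τ | τ ∈ F ∧ ¬ σ ⊆ τ} ∪
  {D | ∃ τ ∈ F, σ ⊆ τ ∧ ∃ c ∈ F, c ⊆ τ ∧ ¬ σ ⊆ c ∧ D = rayJoin v c}

/-! The meet of `(Y, b)` and `(Z, c)` is `(Y ⊓ Z, b && c)`. It is admissible when both hats are
present because any upper bound of `{Y, X}` bounds `{Y ⊓ Z, X}`, and in a finite meet-semilattice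
every pair with an upper bound has a join (the meet of its upper bounds). -/

theorem exists_isLUB_of_bddAbove {L : Type*} [SemilatticeInf L] [Finite L] {s : Set L}
    (hs : BddAbove s) : ∃ j, IsLUB s j := by
  have := Fintype.ofFinite L
  classical
  have hne : (upperBounds s).toFinset.Nonempty := Set.toFinset_nonempty.mpr hs
  exact ⟨_, isGLB_upperBounds.mp (by simpa using Finset.isGLB_inf' hne)⟩

theorem bddAbove_pair_inf_left {M : Type*} [SemilatticeInf M] {Y X : M} (Z : M)
    (h : BddAbove {Y, X}) : BddAbove {Y ⊓ Z, X} := by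
  obtain ⟨j, hj⟩ := h
  refine ⟨j, ?_⟩
  rintro _ (rfl | rfl)
  · exact inf_le_left.trans (hj (Set.mem_insert _ _))
  · exact hj (Set.mem_insert_of_mem _ rfl)

namespace Bl

variable {M : Type*} [SemilatticeInf M] {X : M}

theorem le_iff {a b : Bl X} : a ≤ b ↔ a.1.1 ≤ b.1.1 ∧ a.1.2 ≤ b.1.2 := Iff.rfl

def inf (hjoin : ∀ Y Z : M, BddAbove {Y, Z} → ∃ j, IsLUB {Y, Z} j) (a b : Bl X) : Bl X :=
  ⟨(a.1.1 ⊓ b.1.1, a.1.2 && b.1.2), fun h => a.2.1 (h.trans inf_le_left), fun h =>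
    let ⟨_, hj⟩ := a.2.2 (Bool.and_eq_true_iff.mp h).1
    hjoin _ _ (bddAbove_pair_inf_left _ hj.bddAbove)⟩

theorem isGLB_inf (hjoin : ∀ Y Z : M, BddAbove {Y, Z} → ∃ j, IsLUB {Y, Z} j) (a b : Bl X) :
    IsGLB {a, b} (inf hjoin a b) := by
  refine ⟨?_, fun w hw => ?_⟩
  · rintro _ (rfl | rfl)
    · exact le_iff.mpr ⟨inf_le_left, Bool.and_le_left _ _⟩
    · exact le_iff.mpr ⟨inf_le_right, Bool.and_le_right _ _⟩
  · obtain ⟨hwa₁, hwa₂⟩ := le_iff.mp (hw (Set.mem_insert _ _))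
    obtain ⟨hwb₁, hwb₂⟩ := le_iff.mp (hw (Set.mem_insert_of_mem _ rfl))
    exact le_iff.mpr ⟨le_inf hwa₁ hwb₁, Bool.le_and hwa₂ hwb₂⟩

end Bl

theorem stmt2_general (L : Type*) [SemilatticeInf L] [Fintype L]
    (X : L) :
    ∀ a b : Bl X, ∃ c : Bl X, IsGLB {a, b} c :=
  fun a b => ⟨_, Bl.isGLB_inf (fun _ _ => exists_isLUB_of_bddAbove) a b⟩

/-- The combinatorial blowup `Bl_X(L)` of a finite meet-semilattice
`L` at `X ∈ L \ {⊥}` is again a meet-semilattice. -/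
theorem stmt2 (L : Type*) [SemilatticeInf L] [OrderBot L] [Fintype L]
    (X : L) (hX : X ≠ ⊥) :
    ∀ a b : Bl X, ∃ c : Bl X, IsGLB {a, b} c :=
  stmt2_general L X
end

section
/- Let L be a finite meet-semilattice, G a building set in L, and X ∈ G. Then the subposet of the face poset of the nested set complex N(L,G) consisting of nonempty nested sets S with join ⋁S ≤ X is join-contractible via the nested set {X}; in particular its order complex is contractible. -/
open scoped BigOperators

variable {L : Type*}

/-! ### Auxiliary: contractibility of order complexes of posets with joins -/

section OrderComplexContract

open Classical Finset

variable {V : Type*} [PartialOrder V] [Fintype V]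

/-- Mass of `p` on `{y | x ≤ y}`. -/
noncomputable def ocA (p : V → ℝ) (x : V) : ℝ :=
  ∑ y ∈ Finset.univ.filter (fun y => x ≤ y), p y

/-- Mass of `p` on `{y | x < y}`. -/
noncomputable def ocB (p : V → ℝ) (x : V) : ℝ :=
  ∑ y ∈ Finset.univ.filter (fun y => x < y), p y

/-- Upgraded part of the mass at `x` at time `t`. -/
noncomputable def ocU1 (t : ℝ) (p : V → ℝ) (x : V) : ℝ :=
  min (ocA p x) t - min (ocB p x) t

/-- Non-upgraded part of the mass at `x` at time `t`. -/
noncomputable def ocU0 (t : ℝ) (p : V → ℝ) (x : V) : ℝ := p x - ocU1 t p x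

/-- The prism homotopy between the pushforwards along `f` and along `g`. -/
noncomputable def ocPhi (f g : V → V) (t : ℝ) (p : V → ℝ) (z : V) : ℝ :=
  (∑ x ∈ Finset.univ.filter (fun x => f x = z), ocU0 t p x) +
  (∑ x ∈ Finset.univ.filter (fun x => g x = z), ocU1 t p x)

lemma ocA_eq (p : V → ℝ) (x : V) : ocA p x = p x + ocB p x := by
  have h : Finset.univ.filter (fun y => x ≤ y)
      = insert x (Finset.univ.filter (fun y => x < y)) := by
    ext y
    simp only [Finset.mem_filter, Finset.mem_univ, true_and, Finset.mem_insert]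
    constructor
    · intro h
      rcases eq_or_lt_of_le h with h' | h'
      · exact Or.inl h'.symm
      · exact Or.inr h'
    · rintro (rfl | h)
      · exact le_refl _
      · exact le_of_lt h
  rw [ocA, ocB, h, Finset.sum_insert (by simp)]

lemma ocB_nonneg (p : V → ℝ) (hp : ∀ v, 0 ≤ p v) (x : V) : 0 ≤ ocB p x :=
  Finset.sum_nonneg fun y _ => hp y

lemma ocA_nonneg (p : V → ℝ) (hp : ∀ v, 0 ≤ p v) (x : V) : 0 ≤ ocA p x :=
  Finset.sum_nonneg fun y _ => hp y

lemma ocU1_nonneg (t : ℝ) (p : V → ℝ) (hp : ∀ v, 0 ≤ p v) (x : V) :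
    0 ≤ ocU1 t p x := by
  have h : ocB p x ≤ ocA p x := by rw [ocA_eq]; linarith [hp x]
  have := min_le_min h (le_refl t)
  simp only [ocU1]; linarith

lemma ocU1_le (t : ℝ) (p : V → ℝ) (hp : ∀ v, 0 ≤ p v) (x : V) :
    ocU1 t p x ≤ p x := by
  have hAB := ocA_eq p x
  rcases min_cases (ocA p x) t with ⟨h1, h1'⟩ | ⟨h1, h1'⟩ <;>
    rcases min_cases (ocB p x) t with ⟨h2, h2'⟩ | ⟨h2, h2'⟩ <;>
      simp only [ocU1, h1, h2] <;> linarith [hp x]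

lemma ocU0_nonneg (t : ℝ) (p : V → ℝ) (hp : ∀ v, 0 ≤ p v) (x : V) :
    0 ≤ ocU0 t p x := by
  have := ocU1_le t p hp x
  simp only [ocU0]; linarith

lemma ocU0_ne_zero (t : ℝ) (p : V → ℝ) (hp : ∀ v, 0 ≤ p v) (x : V)
    (h : ocU0 t p x ≠ 0) : p x ≠ 0 ∧ t < ocA p x := by
  constructor
  · intro h0
    apply h
    have h1 := ocU1_nonneg t p hp x
    have h2 := ocU1_le t p hp x
    simp only [ocU0]; rw [h0] at h2 ⊢; linarith
  · by_contra hc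
    push_neg at hc
    have hB : ocB p x ≤ ocA p x := by rw [ocA_eq]; linarith [hp x]
    apply h
    have e := ocA_eq p x
    simp only [ocU0, ocU1, min_eq_left hc, min_eq_left (hB.trans hc)]
    linarith

lemma ocU1_ne_zero (t : ℝ) (p : V → ℝ) (hp : ∀ v, 0 ≤ p v) (x : V)
    (h : ocU1 t p x ≠ 0) : p x ≠ 0 ∧ ocB p x < t := by
  constructor
  · intro h0
    apply h
    have h1 := ocU1_nonneg t p hp x
    have h2 := ocU1_le t p hp x
    rw [h0] at h2; linarith
  · by_contra hc
    push_neg at hc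
    have hB : ocB p x ≤ ocA p x := by rw [ocA_eq]; linarith [hp x]
    apply h
    simp only [ocU1, min_eq_right (hc.trans hB), min_eq_right hc]
    ring

lemma ocA_le_ocB (p : V → ℝ) (hp : ∀ v, 0 ≤ p v) {x₁ x₂ : V} (h : x₂ < x₁) :
    ocA p x₁ ≤ ocB p x₂ := by
  apply Finset.sum_le_sum_of_subset_of_nonneg
  · intro y hy
    simp only [Finset.mem_filter, Finset.mem_univ, true_and] at hy ⊢
    exact lt_of_lt_of_le h hy
  · intro y _ _; exact hp y

lemma gr_sum_univ (p : V → ℝ) (σ : Finset V)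
    (hsupp : ∀ v, p v ≠ 0 → v ∈ σ) (hsum : ∑ v ∈ σ, p v = 1) :
    ∑ v, p v = 1 := by
  rw [← hsum]
  exact (Finset.sum_subset (Finset.subset_univ σ)
    (fun x _ hx => by_contra fun h => hx (hsupp x h))).symm

lemma ocA_le_one (p : V → ℝ) (hp : ∀ v, 0 ≤ p v) (hsum : ∑ v, p v = 1) (x : V) :
    ocA p x ≤ 1 := by
  rw [← hsum]
  exact Finset.sum_le_sum_of_subset_of_nonneg (Finset.filter_subset _ _)
    (fun y _ _ => hp y)

/-- The key membership lemma: `ocPhi f g t p` is a point of the realization of the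
order complex whenever `p` is. -/
lemma ocPhi_mem (f g : V → V) (hf : Monotone f) (hg : Monotone g)
    (hfg : ∀ x, f x ≤ g x) (t : ℝ) (p : V → ℝ)
    (hp0 : ∀ v, 0 ≤ p v) (σ : Finset V) (hσ : IsChain (· ≤ ·) (σ : Set V))
    (hsupp : ∀ v, p v ≠ 0 → v ∈ σ) (hsum : ∑ v ∈ σ, p v = 1) :
    (∀ v, 0 ≤ ocPhi f g t p v) ∧ ∃ s ∈ chainComplex V,
      (∀ v, ocPhi f g t p v ≠ 0 → v ∈ s) ∧ ∑ v ∈ s, ocPhi f g t p v = 1 := by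
  have hU0 := ocU0_nonneg t p hp0
  have hU1 := ocU1_nonneg t p hp0
  have hnn : ∀ v, 0 ≤ ocPhi f g t p v := fun v =>
    add_nonneg (Finset.sum_nonneg fun x _ => hU0 x)
      (Finset.sum_nonneg fun x _ => hU1 x)
  refine ⟨hnn, Finset.univ.filter (fun z => ocPhi f g t p z ≠ 0), ?_, ?_, ?_⟩
  · -- the support is a chain
    have key : ∀ z, ocPhi f g t p z ≠ 0 → ∃ x, p x ≠ 0 ∧
        ((f x = z ∧ t < ocA p x) ∨ (g x = z ∧ ocB p x < t)) := by
      intro z hz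
      rw [ocPhi] at hz
      by_cases h1 : (∑ x ∈ Finset.univ.filter (fun x => f x = z), ocU0 t p x) = 0
      · have h2 : (∑ x ∈ Finset.univ.filter (fun x => g x = z), ocU1 t p x) ≠ 0 := by
          intro h2; exact hz (by rw [h1, h2, add_zero])
        obtain ⟨x, hx, hxne⟩ := Finset.exists_ne_zero_of_sum_ne_zero h2
        simp only [Finset.mem_filter, Finset.mem_univ, true_and] at hx
        obtain ⟨hpx, hBx⟩ := ocU1_ne_zero t p hp0 x hxne
        exact ⟨x, hpx, Or.inr ⟨hx, hBx⟩⟩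
      · obtain ⟨x, hx, hxne⟩ := Finset.exists_ne_zero_of_sum_ne_zero h1
        simp only [Finset.mem_filter, Finset.mem_univ, true_and] at hx
        obtain ⟨hpx, hAx⟩ := ocU0_ne_zero t p hp0 x hxne
        exact ⟨x, hpx, Or.inl ⟨hx, hAx⟩⟩
    intro z₁ hz₁ z₂ hz₂ hne
    simp only [Finset.coe_filter, Set.mem_setOf_eq, Finset.mem_coe,
      Finset.mem_univ, true_and] at hz₁ hz₂
    obtain ⟨x₁, hpx₁, hc₁⟩ := key z₁ hz₁
    obtain ⟨x₂, hpx₂, hc₂⟩ := key z₂ hz₂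
    have hcomp : x₁ ≤ x₂ ∨ x₂ ≤ x₁ := by
      rcases eq_or_ne x₁ x₂ with rfl | hxne
      · exact Or.inl le_rfl
      · exact hσ.total (hsupp _ hpx₁) (hsupp _ hpx₂)
    rcases hc₁ with ⟨rfl, ht₁⟩ | ⟨rfl, ht₁⟩ <;> rcases hc₂ with ⟨rfl, ht₂⟩ | ⟨rfl, ht₂⟩
    · exact hcomp.imp (fun h => hf h) (fun h => hf h)
    · -- z₁ = f x₁ with t < A x₁, z₂ = g x₂ with B x₂ < t
      rcases hcomp with h | h
      · exact Or.inl ((hf h).trans (hfg x₂))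
      · rcases h.lt_or_eq with hlt | heq
        · exact absurd ((ocA_le_ocB p hp0 hlt).trans_lt ht₂) (not_lt.mpr ht₁.le)
        · exact Or.inl (by rw [heq]; exact hfg x₁)
    · rcases hcomp with h | h
      · rcases h.lt_or_eq with hlt | heq
        · have := ocA_le_ocB p hp0 hlt
          exact absurd (this.trans_lt ht₁) (not_lt.mpr ht₂.le)
        · exact Or.inr (by rw [← heq]; exact hfg x₁)
      · exact Or.inr ((hf h).trans (hfg x₁))
    · exact hcomp.imp (fun h => hg h) (fun h => hg h)
  · intro v hv
    simp only [Finset.mem_filter, Finset.mem_univ, true_and]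
    exact hv
  · -- the sum is 1
    have h1 : ∑ z ∈ Finset.univ.filter (fun z => ocPhi f g t p z ≠ 0),
        ocPhi f g t p z = ∑ z, ocPhi f g t p z := by
      apply Finset.sum_subset (Finset.subset_univ _)
      intro x _ hx
      simp only [Finset.mem_filter, Finset.mem_univ, true_and, not_not] at hx
      exact hx
    rw [h1]
    have h2 : ∀ (h : V → V) (u : V → ℝ),
        (∑ z, ∑ x ∈ Finset.univ.filter (fun x => h x = z), u x) = ∑ x, u x := by
      intro h u
      simp only [Finset.sum_filter]
      rw [Finset.sum_comm]
      simp [Finset.sum_ite_eq]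
    simp only [ocPhi]
    rw [Finset.sum_add_distrib, h2 f _, h2 g _, ← Finset.sum_add_distrib]
    have h3 : ∀ x, ocU0 t p x + ocU1 t p x = p x := fun x => by
      simp [ocU0]
    rw [Finset.sum_congr rfl fun x _ => h3 x]
    exact gr_sum_univ p σ hsupp hsum

lemma ocPhi_zero (f g : V → V) (p : V → ℝ) (hp0 : ∀ v, 0 ≤ p v) (z : V) :
    ocPhi f g 0 p z = ∑ x ∈ Finset.univ.filter (fun x => f x = z), p x := by
  have hU1 : ∀ x, ocU1 (0 : ℝ) p x = 0 := by
    intro x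
    simp only [ocU1, min_eq_right (ocA_nonneg p hp0 x),
      min_eq_right (ocB_nonneg p hp0 x), sub_self]
  simp only [ocPhi, hU1, ocU0, sub_zero, Finset.sum_const_zero, add_zero]

lemma ocPhi_one (f g : V → V) (p : V → ℝ) (hp0 : ∀ v, 0 ≤ p v)
    (hsum : ∑ v, p v = 1) (z : V) :
    ocPhi f g 1 p z = ∑ x ∈ Finset.univ.filter (fun x => g x = z), p x := by
  have hU1 : ∀ x, ocU1 (1 : ℝ) p x = p x := by
    intro x
    have hA := ocA_le_one p hp0 hsum x
    have hB : ocB p x ≤ ocA p x := by rw [ocA_eq]; linarith [hp0 x]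
    have he := ocA_eq p x
    simp only [ocU1, min_eq_left hA, min_eq_left (hB.trans hA)]
    linarith
  have hU0 : ∀ x, ocU0 (1 : ℝ) p x = 0 := fun x => by simp [ocU0, hU1]
  simp only [ocPhi, hU1, hU0, Finset.sum_const_zero, zero_add]

lemma ocPhi_continuous (f g : V → V) {Y : Type*} [TopologicalSpace Y]
    (T : Y → ℝ) (P : Y → V → ℝ) (hT : Continuous T)
    (hP : ∀ x, Continuous fun y => P y x) (z : V) :
    Continuous fun y => ocPhi f g (T y) (P y) z := by
  have hA : ∀ x, Continuous fun y => ocA (P y) x := fun x => by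
    simp only [ocA]; exact continuous_finset_sum _ fun i _ => hP i
  have hB : ∀ x, Continuous fun y => ocB (P y) x := fun x => by
    simp only [ocB]; exact continuous_finset_sum _ fun i _ => hP i
  have hU1 : ∀ x, Continuous fun y => ocU1 (T y) (P y) x := fun x =>
    ((hA x).min hT).sub ((hB x).min hT)
  have hU0 : ∀ x, Continuous fun y => ocU0 (T y) (P y) x := fun x =>
    (hP x).sub (hU1 x)
  exact (continuous_finset_sum _ fun i _ => hU0 i).add
    (continuous_finset_sum _ fun i _ => hU1 i)

/-- The simplicial pushforward along a monotone map, as a continuous self-map of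
the realization of the order complex. -/
noncomputable def pushMap (f : V → V) (hf : Monotone f) :
    C(geomReal (chainComplex V), geomReal (chainComplex V)) where
  toFun p := ⟨ocPhi f f 0 p.1, by
    obtain ⟨hp0, σ, hσ, hsupp, hsum⟩ := p.2
    exact ocPhi_mem f f hf hf (fun x => le_rfl) 0 p.1 hp0 σ hσ hsupp hsum⟩
  continuous_toFun := by
    apply Continuous.subtype_mk
    apply continuous_pi
    intro z
    exact ocPhi_continuous f f (fun _ => (0 : ℝ))
      (fun p : geomReal (chainComplex V) => (p.1 : V → ℝ))
      continuous_const
      (fun x => by exact (continuous_apply x).comp continuous_subtype_val) z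

/-- The prism homotopy between the pushforwards along two pointwise-comparable
monotone maps. -/
noncomputable def pushHomotopy (f g : V → V) (hf : Monotone f) (hg : Monotone g)
    (hfg : ∀ x, f x ≤ g x) :
    ContinuousMap.Homotopy (pushMap f hf) (pushMap g hg) where
  toFun q := ⟨ocPhi f g (q.1 : ℝ) q.2.1, by
    obtain ⟨hp0, σ, hσ, hsupp, hsum⟩ := q.2.2
    exact ocPhi_mem f g hf hg hfg _ _ hp0 σ hσ hsupp hsum⟩
  continuous_toFun := by
    apply Continuous.subtype_mk
    apply continuous_pi
    intro z
    have hT : Continuous fun q : unitInterval × geomReal (chainComplex V) => (q.1 : ℝ) := by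
      fun_prop
    have hP : ∀ x, Continuous fun q : unitInterval × geomReal (chainComplex V) =>
        (q.2.1 : V → ℝ) x := by
      intro x
      exact (continuous_apply x).comp (continuous_subtype_val.comp continuous_snd)
    exact ocPhi_continuous f g _ _ hT hP z
  map_zero_left p := by
    apply Subtype.ext
    funext z
    obtain ⟨hp0, σ, hσ, hsupp, hsum⟩ := p.2
    show ocPhi f g ((0 : unitInterval) : ℝ) p.1 z = _
    rw [show ((0 : unitInterval) : ℝ) = 0 from rfl,
      ocPhi_zero f g p.1 hp0 z]
    exact (ocPhi_zero f f p.1 hp0 z).symm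
  map_one_left p := by
    apply Subtype.ext
    funext z
    obtain ⟨hp0, σ, hσ, hsupp, hsum⟩ := p.2
    have h1 := gr_sum_univ p.1 σ hsupp hsum
    show ocPhi f g ((1 : unitInterval) : ℝ) p.1 z = _
    rw [show ((1 : unitInterval) : ℝ) = 1 from rfl,
      ocPhi_one f g p.1 hp0 h1 z]
    exact (ocPhi_zero g g p.1 hp0 z).symm

lemma pushMap_id : pushMap (id : V → V) monotone_id = ContinuousMap.id _ := by
  apply ContinuousMap.ext
  intro p
  apply Subtype.ext
  funext z
  obtain ⟨hp0, σ, hσ, hsupp, hsum⟩ := p.2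
  show ocPhi (id : V → V) id 0 p.1 z = p.1 z
  rw [ocPhi_zero id id p.1 hp0 z]
  simp [Finset.sum_filter]

/-- The Dirac point at a vertex. -/
noncomputable def deltaPt (x₀ : V) : geomReal (chainComplex V) :=
  ⟨fun z => if x₀ = z then 1 else 0, by
    refine ⟨fun v => by positivity, {x₀}, ?_, ?_, ?_⟩
    · show IsChain (· ≤ ·) (({x₀} : Finset V) : Set V)
      rw [Finset.coe_singleton]
      exact Set.subsingleton_singleton.isChain
    · intro v hv
      by_cases h : x₀ = v
      · simp [h]
      · simp [h] at hv
    · simp⟩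

lemma pushMap_const (x₀ : V) :
    pushMap (fun _ : V => x₀) monotone_const
      = ContinuousMap.const _ (deltaPt x₀) := by
  apply ContinuousMap.ext
  intro p
  apply Subtype.ext
  funext z
  obtain ⟨hp0, σ, hσ, hsupp, hsum⟩ := p.2
  have hsu := gr_sum_univ p.1 σ hsupp hsum
  show ocPhi (fun _ : V => x₀) (fun _ : V => x₀) 0 p.1 z = _
  rw [ocPhi_zero _ _ p.1 hp0 z]
  by_cases h : x₀ = z
  · rw [show (Finset.univ.filter fun _ : V => x₀ = z) = Finset.univ by
      simp [Finset.filter_true_of_mem, h]]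
    simpa [deltaPt, h] using hsu
  · rw [show (Finset.univ.filter fun _ : V => x₀ = z) = ∅ by
      simp [Finset.filter_false_of_mem, h]]
    simp [deltaPt, h]

/-- If every element of a finite poset has a join with `x₀` (witnessed by a
monotone map `c` with `v ≤ c v` and `x₀ ≤ c v`), then the realization of its
order complex is contractible. -/
lemma contractible_of_join (x₀ : V) (c : V → V) (hc : Monotone c)
    (h1 : ∀ v, v ≤ c v) (h2 : ∀ v, x₀ ≤ c v) :
    ContractibleSpace (geomReal (chainComplex V)) := by
  rw [contractible_iff_id_nullhomotopic]
  refine ⟨deltaPt x₀, ?_⟩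
  have H1 : (pushMap (id : V → V) monotone_id).Homotopic (pushMap c hc) :=
    ⟨pushHomotopy id c monotone_id hc h1⟩
  have H2 : (pushMap (fun _ : V => x₀) monotone_const).Homotopic (pushMap c hc) :=
    ⟨pushHomotopy _ c monotone_const hc h2⟩
  have H := H1.trans H2.symm
  rwa [pushMap_id, pushMap_const] at H

end OrderComplexContract

/-- For `X ∈ G`, the poset of nonempty nested sets with join `≤ X`
is join-contractible via the nested set `{X}`; in particular its order
complex is contractible. -/
theorem stmt4 (L : Type*) [SemilatticeInf L] [OrderBot L] [Fintype L]
    (G : Set L) (hG : IsBuilding L G) (X : L) (hX : X ∈ G) :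
    ∃ x₀ : NestedFiber G X, x₀.1 = ({X} : Finset L) ∧
      (∀ S : NestedFiber G X, ∃ T : NestedFiber G X, IsLUB {x₀, S} T) ∧
      ContractibleSpace (geomReal (chainComplex (NestedFiber G X))) := by
  classical
  -- the base point `{X}`
  have hnestedX : IsNested G ({X} : Finset L) := by
    constructor
    · intro a ha
      rw [Finset.coe_singleton, Set.mem_singleton_iff] at ha
      rw [ha]; exact hX
    · intro A hA _ hcard
      have h1 : A.card ≤ 1 :=
        le_trans (Finset.card_le_card hA) (by simp)
      omega
  have hlubX : IsLUB (({X} : Finset L) : Set L) X := by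
    rw [Finset.coe_singleton]; exact isLUB_singleton
  set x0 : NestedFiber G X :=
    ⟨{X}, hnestedX, Finset.singleton_nonempty X, X, hlubX, le_rfl⟩ with hx0
  -- the join map `S ↦ S ∪ {X}`
  have hmemc : ∀ S : NestedFiber G X, IsNested G (insert X S.1) ∧
      (insert X S.1).Nonempty ∧
      ∃ j, IsLUB ((insert X S.1 : Finset L) : Set L) j ∧ j ≤ X := by
    intro S
    obtain ⟨hSn, hSne, j, hj, hjX⟩ := S.2
    have hle : ∀ s ∈ S.1, s ≤ X := fun s hs =>
      (hj.1 (Finset.mem_coe.mpr hs)).trans hjX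
    refine ⟨⟨?_, ?_⟩, Finset.insert_nonempty _ _, X, ?_, le_rfl⟩
    · intro a ha
      rw [Finset.coe_insert, Set.mem_insert_iff] at ha
      rcases ha with rfl | ha
      · exact hX
      · exact hSn.1 ha
    · intro A hA hanti hcard
      by_cases hXA : X ∈ A
      · exfalso
        obtain ⟨a, haA, haX⟩ := Finset.exists_mem_ne (s := A) (by omega) X
        have haS : a ∈ S.1 := by
          have h := hA haA
          rw [Finset.mem_insert] at h
          rcases h with rfl | h
          · exact absurd rfl haX
          · exact h
        exact hanti (Finset.mem_coe.mpr haA) (Finset.mem_coe.mpr hXA) haX (hle a haS)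
      · refine hSn.2 A ?_ hanti hcard
        intro a ha
        have h := hA ha
        rw [Finset.mem_insert] at h
        rcases h with rfl | h
        · exact absurd ha hXA
        · exact h
    · rw [Finset.coe_insert]
      constructor
      · rintro a ha
        rcases Set.mem_insert_iff.mp ha with rfl | ha
        · exact le_rfl
        · exact hle a (Finset.mem_coe.mp ha)
      · intro b hb
        exact hb (Set.mem_insert X _)
  set cfun : NestedFiber G X → NestedFiber G X :=
    fun S => ⟨insert X S.1, hmemc S⟩ with hcfun
  have hmono : Monotone cfun := by
    intro a b hab
    show (insert X a.1 : Finset L) ≤ insert X b.1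
    exact Finset.insert_subset_insert X hab
  have hle1 : ∀ S : NestedFiber G X, S ≤ cfun S := fun S =>
    show S.1 ≤ insert X S.1 from Finset.subset_insert X S.1
  have hle2 : ∀ S : NestedFiber G X, x0 ≤ cfun S := fun S =>
    show ({X} : Finset L) ≤ insert X S.1 from
      Finset.singleton_subset_iff.mpr (Finset.mem_insert_self X S.1)
  refine ⟨x0, rfl, ?_, ?_⟩
  · intro S
    refine ⟨cfun S, ?_, ?_⟩
    · rintro u hu
      rcases hu with rfl | hu
      · exact hle2 S
      · rw [Set.mem_singleton_iff] at hu
        rw [hu]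
        exact hle1 S
    · intro b hb
      have h1 : x0 ≤ b := hb (Set.mem_insert _ _)
      have h2 : S ≤ b := hb (Set.mem_insert_of_mem _ rfl)
      show (insert X S.1 : Finset L) ≤ b.1
      refine Finset.insert_subset ?_ h2
      exact Finset.singleton_subset_iff.mp h1
  · haveI : Fintype (NestedFiber G X) := by
      unfold NestedFiber
      infer_instance
    exact contractible_of_join x0 cfun hmono hle1 hle2
end

section
/- Let L be a finite meet-semilattice, G and H building sets in L with H ⊆ G, and let G₀ be a minimal element of G \ H. Then Ḡ := G \ {G₀} is again a building set in L. Moreover, for any X ∈ L \ {0̂}: max Ḡ_{≤X} = F_G(X) if G₀ ∉ F_G(X), and max Ḡ_{≤X} = (F_G(X) \ {G₀}) ∪ F_H(G₀) if G₀ ∈ F_G(X). -/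
open scoped BigOperators

variable {L : Type*}

/-!
Removing `G₀` only affects the factors of those `X` having `G₀` as a factor, and there the
`H`-factors of `G₀` take its place; this is read off from maximality, the only non-formal input
being that distinct `G`-factors of `X` are disjoint. For the product decomposition, the
decomposition of `[⊥, X]` along `F_G(X)` restricts on the `G₀`-coordinate to an automorphism `α`
of `[⊥, G₀]`; substituting the decomposition of `[⊥, G₀]` along `F_H(G₀)`, corrected by `α⁻¹`,
into that coordinate gives a decomposition along `(F_G(X) \ {G₀}) ∪ F_H(G₀)` which still sends
unit vectors to the factors.
-/

open Function Set

abbrev IccPi [Preorder L] [OrderBot L] (S : Set L) : Type _ := (g : S) → Icc (⊥ : L) g.1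

instance fact_bot_le [Preorder L] [OrderBot L] (x : L) : Fact (⊥ ≤ x) := ⟨bot_le⟩

section Factors

variable [PartialOrder L]

lemma exists_le_mem_factorsSet [Finite L] {S : Set L} {X x : L} (hx : x ∈ S) (hxX : x ≤ X) :
    ∃ m ∈ factorsSet S X, x ≤ m := by
  obtain ⟨m, hxm, hm⟩ := Finite.exists_le_maximal (p := fun s => s ∈ S ∧ s ≤ X) ⟨hx, hxX⟩
  exact ⟨m, ⟨hm.1.1, hm.1.2, fun h hh hhX hmh => le_antisymm hmh (hm.2 ⟨hh, hhX⟩ hmh)⟩, hxm⟩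

lemma factorsSet_diff_singleton_of_not_mem {G : Set L} {g₀ X : L} (h : g₀ ∉ factorsSet G X) :
    factorsSet (G \ {g₀}) X = factorsSet G X := by
  ext k
  constructor
  · rintro ⟨⟨hkG, hkg₀⟩, hkX, hmax⟩
    refine ⟨hkG, hkX, fun j hjG hjX hkj => ?_⟩
    by_cases hj : j = g₀
    · subst hj
      obtain ⟨j', hj'G, hj'X, hjj', hne⟩ : ∃ j' ∈ G, j' ≤ X ∧ j ≤ j' ∧ j ≠ j' := by
        by_contra! hmax'
        exact h ⟨hjG, hjX, hmax'⟩
      have hkj' : k = j' := hmax j' ⟨hj'G, fun h => hne (h ▸ rfl)⟩ hj'X (hkj.trans hjj')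
      exact absurd (le_antisymm hkj (hkj' ▸ hjj')) hkg₀
    · exact hmax j ⟨hjG, hj⟩ hjX hkj
  · rintro ⟨hkG, hkX, hmax⟩
    exact ⟨⟨hkG, fun hk => h (hk ▸ ⟨hkG, hkX, hmax⟩)⟩, hkX, fun j hj => hmax j hj.1⟩

end Factors

section PartialOrder

open Classical

variable [PartialOrder L] [OrderBot L]

lemma eq_update_bot_top_iff {S : Set L} {u : IccPi S} {g : S} :
    u = update ⊥ g ⊤ ↔ (u g : L) = g ∧ ∀ h ≠ g, (u h : L) = ⊥ := by
  constructor
  · rintro rfl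
    exact ⟨by simp, fun h hne => by simp [hne]⟩
  · rintro ⟨hg, hne⟩
    funext h
    by_cases hh : h = g
    · subst hh
      exact Subtype.ext (by simpa using hg)
    · exact Subtype.ext (by simpa [hh] using hne h hh)

lemma coe_update_bot_top {S : Set L} (g h : S) :
    ((update ⊥ g ⊤ : IccPi S) h : L) = if h.1 = g.1 then g.1 else ⊥ := by
  by_cases hh : h = g
  · subst hh
    simp
  · simp [hh, Subtype.ext_iff.not.mp hh]

def IsFactorization (S : Set L) (X : L) : Prop :=
  ∃ φ : IccPi S ≃o Icc (⊥ : L) X, ∀ g, (φ (update ⊥ g ⊤) : L) = g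

lemma isBuilding_iff {G : Set L} :
    IsBuilding L G ↔ (∀ g ∈ G, g ≠ ⊥) ∧ ∀ X : L, X ≠ ⊥ → IsFactorization (factorsSet G X) X := by
  refine and_congr_right' (forall₂_congr fun X _ => exists_congr fun φ => forall_congr' fun g => ?_)
  refine ⟨fun h => h _ (by simp) fun k hk => by simp [hk], fun h u hg hne => ?_⟩
  rwa [eq_update_bot_top_iff.mpr ⟨hg, hne⟩]

lemma exists_orderIso_update {A : Set L} {X : L} (φ : IccPi A ≃o Icc (⊥ : L) X) (a : A)
    (ha : (φ (update ⊥ a ⊤) : L) = a) :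
    ∃ α : Icc (⊥ : L) a.1 ≃o Icc (⊥ : L) a.1, ∀ c, (α c : L) = φ (update ⊥ a c) := by
  have hle : ∀ c, (φ (update ⊥ a c) : L) ≤ a := fun c =>
    ha ▸ Subtype.coe_le_coe.mpr (φ.monotone (update_le_update_iff'.mpr le_top))
  let e : Icc (⊥ : L) a.1 ↪o Icc (⊥ : L) a.1 :=
    OrderEmbedding.ofMapLEIff (fun c => ⟨φ (update ⊥ a c), bot_le, hle c⟩) fun c c' => by
      change (φ (update ⊥ a c) : L) ≤ φ (update ⊥ a c') ↔ c ≤ c'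
      rw [Subtype.coe_le_coe, φ.le_iff_le, update_le_update_iff']
  refine ⟨OrderIso.ofSurjective e fun z => ?_, fun c => rfl⟩
  have haX : (a : L) ≤ X := ha ▸ (φ (update ⊥ a ⊤)).2.2
  set v := φ.symm ⟨z, bot_le, z.2.2.trans haX⟩
  have hv : v ≤ update ⊥ a ⊤ := by
    rw [OrderIso.symm_apply_le, ← Subtype.coe_le_coe, ha]
    exact z.2.2
  have hva : update ⊥ a (v a) = v := by
    funext j
    by_cases hj : j = a
    · subst hj
      simp
    · rw [update_of_ne hj]
      exact (le_bot_iff.mp ((le_update_iff.mp hv).2 j hj)).symm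
  exact ⟨v a, Subtype.ext (by simp [e, hva, v])⟩

section Splice

variable {A B : Set L} {a₀ : L}

variable (ha₀ : a₀ ∈ A) (hBA : ∀ b ∈ B, b ∈ A → b = a₀) (θ : IccPi B ≃o Icc (⊥ : L) a₀)

/-- Substitutes, through `θ`, the coordinates indexed by `B` for the `a₀`-coordinate. -/
noncomputable def splice : IccPi (A \ {a₀} ∪ B) ≃o IccPi A :=
  Equiv.toOrderIso
    { toFun := fun u a =>
        if h : a.1 = a₀ then ⟨θ (fun b => u ⟨b, .inr b.2⟩), bot_le, (θ _).2.2.trans h.ge⟩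
        else u ⟨a, .inl ⟨a.2, h⟩⟩
      invFun := fun v f =>
        if h : f.1 ∈ B then θ.symm (v ⟨a₀, ha₀⟩) ⟨f, h⟩ else v ⟨f, (f.2.resolve_right h).1⟩
      left_inv := fun u => by
        funext f
        by_cases hf : f.1 ∈ B
        · simp only [hf, dif_pos]
          exact congrFun (θ.symm_apply_apply _) ⟨f, hf⟩
        · have hfa₀ : f.1 ≠ a₀ := (f.2.resolve_right hf).2
          simp [hf, hfa₀]
      right_inv := fun v => by
        funext a
        by_cases ha : a.1 = a₀
        · have : a = ⟨a₀, ha₀⟩ := Subtype.ext ha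
          subst this
          simp only [dif_pos, Subtype.coe_prop]
          exact θ.apply_symm_apply _
        · have haB : a.1 ∉ B := fun hB => ha (hBA a hB a.2)
          simp [ha, haB] }
    (fun u u' huu a => by
      dsimp only [Equiv.coe_fn_mk]
      split_ifs
      · exact θ.monotone fun b => huu _
      · exact huu _)
    (fun v v' hvv f => by
      dsimp only [Equiv.coe_fn_symm_mk]
      split_ifs
      · exact θ.symm.monotone (hvv _) _
      · exact hvv _)

lemma splice_apply_self (u : IccPi (A \ {a₀} ∪ B)) :
    splice ha₀ hBA θ u ⟨a₀, ha₀⟩ = θ (fun b => u ⟨b, .inr b.2⟩) :=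
  dif_pos rfl

lemma splice_apply_of_ne (u : IccPi (A \ {a₀} ∪ B)) (a : A) (ha : a.1 ≠ a₀) :
    splice ha₀ hBA θ u a = u ⟨a, .inl ⟨a.2, ha⟩⟩ :=
  dif_neg ha

lemma splice_update_of_mem (f : ↥(A \ {a₀} ∪ B)) (hf : f.1 ∈ B) :
    splice ha₀ hBA θ (update ⊥ f ⊤) = update ⊥ ⟨a₀, ha₀⟩ (θ (update ⊥ ⟨f, hf⟩ ⊤)) := by
  funext a
  by_cases ha : a.1 = a₀
  · obtain rfl : a = ⟨a₀, ha₀⟩ := Subtype.ext ha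
    rw [splice_apply_self, update_self]
    congr
    funext b
    exact Subtype.ext (by simp only [coe_update_bot_top])
  · have haf : a.1 ≠ f.1 := fun h => ha (hBA a (h ▸ hf) a.2)
    have ha' : a ≠ ⟨a₀, ha₀⟩ := fun h => ha (congrArg Subtype.val h)
    rw [splice_apply_of_ne _ _ _ _ _ ha, update_of_ne ha']
    exact Subtype.ext (by simp [coe_update_bot_top, haf])

lemma splice_update_of_not_mem (f : ↥(A \ {a₀} ∪ B)) (hf : f.1 ∉ B) :
    splice ha₀ hBA θ (update ⊥ f ⊤) = update ⊥ ⟨f, (f.2.resolve_right hf).1⟩ ⊤ := by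
  funext a
  refine Subtype.ext ?_
  by_cases ha : a.1 = a₀
  · obtain rfl : a = ⟨a₀, ha₀⟩ := Subtype.ext ha
    have hres : (fun b : B => (update ⊥ f ⊤ : IccPi (A \ {a₀} ∪ B)) ⟨b, .inr b.2⟩) = ⊥ :=
      funext fun b => Subtype.ext (by simp [coe_update_bot_top, ne_of_mem_of_not_mem b.2 hf])
    have hfa : f.1 ≠ a₀ := (f.2.resolve_right hf).2
    simp [splice_apply_self, hres, hfa.symm]
  · simp [splice_apply_of_ne _ _ _ _ _ ha, coe_update_bot_top]

end Splice

theorem IsFactorization.diff_union {A B : Set L} {a₀ X : L} (hA : IsFactorization A X)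
    (hB : IsFactorization B a₀) (ha₀ : a₀ ∈ A) (hBA : ∀ b ∈ B, b ∈ A → b = a₀) :
    IsFactorization (A \ {a₀} ∪ B) X := by
  obtain ⟨φ, hφ⟩ := hA
  obtain ⟨ψ, hψ⟩ := hB
  obtain ⟨α, hα⟩ := exists_orderIso_update φ ⟨a₀, ha₀⟩ (hφ _)
  refine ⟨(splice ha₀ hBA (ψ.trans α.symm)).trans φ, fun f => ?_⟩
  by_cases hf : f.1 ∈ B
  · rw [OrderIso.trans_apply, splice_update_of_mem _ _ _ f hf, ← hα, OrderIso.trans_apply,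
      α.apply_symm_apply, hψ]
  · rw [OrderIso.trans_apply, splice_update_of_not_mem _ _ _ f hf, hφ]

lemma IsBuilding.disjoint_of_mem_factorsSet {G : Set L} (hG : IsBuilding L G) {X g g' : L}
    (hX : X ≠ ⊥) (hg : g ∈ factorsSet G X) (hg' : g' ∈ factorsSet G X) (hne : g ≠ g') :
    Disjoint g g' := by
  obtain ⟨φ, hφ⟩ := (isBuilding_iff.mp hG).2 X hX
  intro a hag hag'
  set v := φ.symm ⟨a, bot_le, hag.trans hg.2.1⟩
  have hv : ∀ k : factorsSet G X, a ≤ k → ∀ j ≠ k, v j ≤ ⊥ := fun k hk =>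
    (le_update_iff.mp ((φ.symm_apply_le (x := update ⊥ k ⊤)).mpr
      (by rw [← Subtype.coe_le_coe, hφ]; exact hk))).2
  have hv_bot : v = ⊥ := by
    funext j
    refine le_bot_iff.mp ?_
    by_cases hj : j = ⟨g, hg⟩
    · exact hv ⟨g', hg'⟩ hag' j (hj ▸ fun h => hne (congrArg Subtype.val h))
    · exact hv ⟨g, hg⟩ hag j hj
  calc a = (φ v : L) := by simp [v]
    _ ≤ ⊥ := by rw [hv_bot, φ.map_bot]; rfl

lemma factorsSet_diff_singleton_of_mem [Finite L] {G H : Set L} (hG : IsBuilding L G)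
    (hH : ⊥ ∉ H) (hHG : H ⊆ G) {G₀ X : L} (hX : X ≠ ⊥) (hG₀H : G₀ ∉ H)
    (hmin : ∀ g ∈ G, g ∉ H → g ≤ G₀ → g = G₀) (hf : G₀ ∈ factorsSet G X) :
    factorsSet (G \ {G₀}) X = factorsSet G X \ {G₀} ∪ factorsSet H G₀ := by
  have hbelow : ∀ g ∈ G, g ≤ G₀ → g ≠ G₀ → g ∈ H := fun g hg hle hne =>
    by_contra fun hgH => hne (hmin g hg hgH hle)
  ext k
  constructor
  · rintro ⟨⟨hkG, hkG₀⟩, hkX, hmax⟩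
    obtain ⟨m, hm, hkm⟩ := exists_le_mem_factorsSet hkG hkX
    by_cases hmG₀ : m = G₀
    · rw [hmG₀] at hkm
      obtain ⟨h, hh, hkh⟩ := exists_le_mem_factorsSet (hbelow k hkG hkm hkG₀) hkm
      have hkh' : k = h :=
        hmax h ⟨hHG hh.1, fun e => hG₀H (e ▸ hh.1)⟩ (hh.2.1.trans hf.2.1) hkh
      exact .inr (hkh' ▸ hh)
    · exact .inl ⟨hmax m ⟨hm.1, hmG₀⟩ hm.2.1 hkm ▸ hm, hkG₀⟩
  · rintro (⟨hk, hkG₀⟩ | hk)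
    · exact ⟨⟨hk.1, hkG₀⟩, hk.2.1, fun j hj => hk.2.2 j hj.1⟩
    · have hkG₀ : k ≠ G₀ := fun e => hG₀H (e ▸ hk.1)
      refine ⟨⟨hHG hk.1, hkG₀⟩, hk.2.1.trans hf.2.1, fun j ⟨hjG, hjG₀⟩ hjX hkj => ?_⟩
      by_cases hjle : j ≤ G₀
      · exact hk.2.2 j (hbelow j hjG hjle hjG₀) hjle hkj
      · obtain ⟨m, hm, hjm⟩ := exists_le_mem_factorsSet hjG hjX
        have hmG₀ : m ≠ G₀ := fun e => hjle (e ▸ hjm)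
        have hk_bot : k = ⊥ :=
          le_bot_iff.mp (hG.disjoint_of_mem_factorsSet hX hm hf hmG₀ (hkj.trans hjm) hk.2.1)
        exact absurd (hk_bot ▸ hk.1) hH

end PartialOrder

/-- If `H ⊆ G` are building sets and `G₀` is minimal in `G \ H`,
then `G \ {G₀}` is again a building set, and the factor sets transform as
stated. -/
theorem stmt10 (L : Type*) [SemilatticeInf L] [OrderBot L] [Fintype L]
    (G H : Set L) (hG : IsBuilding L G) (hH : IsBuilding L H) (hHG : H ⊆ G)
    (G₀ : L) (hG₀G : G₀ ∈ G) (hG₀H : G₀ ∉ H)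
    (hmin : ∀ g ∈ G, g ∉ H → g ≤ G₀ → g = G₀) :
    IsBuilding L (G \ {G₀}) ∧
    ∀ X : L, X ≠ ⊥ →
      (G₀ ∉ factorsSet G X → factorsSet (G \ {G₀}) X = factorsSet G X) ∧
      (G₀ ∈ factorsSet G X →
        factorsSet (G \ {G₀}) X = (factorsSet G X \ {G₀}) ∪ factorsSet H G₀) := by
  have hbotH : ⊥ ∉ H := fun hbot => hH.1 ⊥ hbot rfl
  refine ⟨isBuilding_iff.mpr ⟨fun g hg => hG.1 g hg.1, fun X hX => ?_⟩, fun X hX =>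
    ⟨factorsSet_diff_singleton_of_not_mem,
      factorsSet_diff_singleton_of_mem hG hbotH hHG hX hG₀H hmin⟩⟩
  have hGX := (isBuilding_iff.mp hG).2 X hX
  by_cases hf : G₀ ∈ factorsSet G X
  · rw [factorsSet_diff_singleton_of_mem hG hbotH hHG hX hG₀H hmin hf]
    exact hGX.diff_union ((isBuilding_iff.mp hH).2 G₀ (hG.1 G₀ hG₀G)) hf
      fun b hb hbX => hbX.2.2 G₀ hG₀G hf.2.1 hb.2.1
  · rwa [factorsSet_diff_singleton_of_not_mem hf]
end

section
/- Let L be a finite meet-semilattice, G a building set in L, and H = G \ {G₀} also a building set (with G₀ ∈ G minimal in G \ H). If S is a G-nested set with G₀ ∈ S, then (S \ {G₀}) ∪ F_H(G₀) is H-nested. -/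
/-! An antichain `A` of `(S \ {G₀}) ∪ F_H(G₀)` avoiding `F_H(G₀)` lies in `S`. If instead it
contains a factor `a₀` of `G₀`, then either `A` lies below `G₀`, and the maximality of `a₀` among
the `H`-elements below `G₀` keeps the join of `A` out of `H`; or the elements of `A` not below
`G₀`, together with `G₀`, form a `G`-nested antichain whose join `k` is not in `G`. In the latter
case `k = (⋁ A) ∨ G₀`, and since `⋁ A` and `G₀` share the nonzero element `a₀`, the building
property would force `k ∈ G` if `⋁ A` were in `H`. -/

open scoped BigOperators

variable {L : Type*}

theorem exists_isLUB_of_mem_upperBounds [SemilatticeInf L] [Finite L] {A : Set L} {k : L}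
    (hk : k ∈ upperBounds A) : ∃ j, IsLUB A j := by
  obtain ⟨m, hm⟩ := (Set.toFinite (upperBounds A)).exists_minimal ⟨k, hk⟩
  refine ⟨m, hm.prop, fun y hy => ?_⟩
  have hmy : m ⊓ y ∈ upperBounds A := fun a ha => le_inf (hm.prop ha) (hy ha)
  exact (hm.le_of_le hmy inf_le_left).trans inf_le_right

theorem exists_mem_factorsSet_ge [PartialOrder L] [Finite L] {G : Set L} {X g : L}
    (hg : g ∈ G) (hgX : g ≤ X) : ∃ p ∈ factorsSet G X, g ≤ p := by
  obtain ⟨p, hgp, hp⟩ := (Set.toFinite (G ∩ Set.Iic X)).exists_le_maximal ⟨hg, hgX⟩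
  exact ⟨p, ⟨hp.prop.1, hp.prop.2, fun h hh hhX hph => hp.eq_of_le ⟨hh, hhX⟩ hph⟩, hgp⟩

theorem IsBuilding.inf_eq_bot_of_mem_factorsSet [SemilatticeInf L] [OrderBot L] {G : Set L}
    (hG : IsBuilding L G) {X p q : L} (hX : X ≠ ⊥) (hp : p ∈ factorsSet G X)
    (hq : q ∈ factorsSet G X) (hpq : p ≠ q) : p ⊓ q = ⊥ := by
  classical
  obtain ⟨φ, hφ⟩ := hG.2 X hX
  let e (g : factorsSet G X) : (h : factorsSet G X) → Set.Icc (⊥ : L) h.1 :=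
    fun h => if h = g then ⟨h.1, bot_le, le_rfl⟩ else ⟨⊥, le_rfl, bot_le⟩
  have he_bot {g h : factorsSet G X} (hne : h ≠ g) : (e g h : L) = ⊥ := by simp [e, hne]
  have hφe (g : factorsSet G X) : (φ (e g) : L) = g := hφ g (e g) (by simp [e]) fun h => he_bot
  -- `p ⊓ q` pulls back below both unit vectors `e p` and `e q`, hence to the zero vector.
  let m := φ.symm ⟨p ⊓ q, bot_le, inf_le_left.trans hp.2.1⟩
  have hm (g : factorsSet G X) (hg : p ⊓ q ≤ g) : m ≤ e g :=
    φ.symm_apply_le.mpr (by rw [← Subtype.coe_le_coe, hφe]; exact hg)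
  have hm_bot : m ≤ φ.symm ⟨⊥, le_rfl, bot_le⟩ := by
    intro h
    have hmh {g : factorsSet G X} (hg : p ⊓ q ≤ g) (hne : h ≠ g) : (m h : L) = ⊥ := by
      simpa [he_bot hne] using Subtype.coe_le_coe.mpr (hm g hg h)
    rw [← Subtype.coe_le_coe]
    by_cases hhp : h = ⟨p, hp⟩
    · have hhq : h ≠ ⟨q, hq⟩ := fun hhq => hpq (congrArg Subtype.val (hhp.symm.trans hhq))
      rw [hmh (g := ⟨q, hq⟩) inf_le_right hhq]
      exact bot_le
    · rw [hmh (g := ⟨p, hp⟩) inf_le_left hhp]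
      exact bot_le
  have := φ.le_symm_apply.mp hm_bot
  rw [OrderIso.apply_symm_apply, ← Subtype.coe_le_coe] at this
  exact le_bot_iff.mp this

theorem IsBuilding.mem_of_isLUB_pair [SemilatticeInf L] [OrderBot L] [Finite L] {G : Set L}
    (hG : IsBuilding L G) {x y k : L} (hx : x ∈ G) (hy : y ∈ G) (hxy : x ⊓ y ≠ ⊥)
    (hk : IsLUB {x, y} k) : k ∈ G := by
  have hxk : x ≤ k := hk.1 (Set.mem_insert x _)
  have hyk : y ≤ k := hk.1 (Set.mem_insert_of_mem x rfl)
  have hk_ne : k ≠ ⊥ := fun h => hxy (le_bot_iff.mp (h ▸ inf_le_left.trans hxk))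
  obtain ⟨p, hp, hxp⟩ := exists_mem_factorsSet_ge hx hxk
  obtain ⟨q, hq, hyq⟩ := exists_mem_factorsSet_ge hy hyk
  have hpq : p = q := by
    by_contra hpq
    exact hxy (le_bot_iff.mp (hG.inf_eq_bot_of_mem_factorsSet hk_ne hp hq hpq ▸
      inf_le_inf hxp hyq))
  have hkp : k ≤ p := hk.2 (by simp [upperBounds, hxp, hpq ▸ hyq])
  exact le_antisymm hp.2.1 hkp ▸ hp.1

theorem notMem_of_mem_upperBounds_of_mem_factorsSet [PartialOrder L] {H A : Set L}
    {X a₀ j : L} (hanti : IsAntichain (· ≤ ·) A) (hA : A.Nontrivial) (ha₀ : a₀ ∈ A)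
    (ha₀X : a₀ ∈ factorsSet H X) (hj : j ∈ upperBounds A) (hjX : j ≤ X) : j ∉ H := by
  intro hjH
  have ha₀j : a₀ = j := ha₀X.2.2 j hjH hjX (hj ha₀)
  obtain ⟨a, ha, hne⟩ := hA.exists_ne a₀
  exact hanti ha ha₀ hne (ha₀j ▸ hj ha)

theorem IsNested.exists_isLUB_notMem_of_mem_factorsSet [SemilatticeInf L] [OrderBot L]
    [Finite L] {G : Set L} {G₀ a₀ : L} {S A : Finset L}
    (hG : IsBuilding L G) (hG₀ : G₀ ∈ G) (hS : IsNested G S) (hmem : G₀ ∈ S)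
    (hAS : ∀ a ∈ A, ¬ a ≤ G₀ → a ∈ S) (hanti : IsAntichain (· ≤ ·) (A : Set L))
    (hcard : 2 ≤ A.card) (ha₀ : a₀ ∈ A) (ha₀G₀ : a₀ ∈ factorsSet (G \ {G₀}) G₀) :
    ∃ j, IsLUB (A : Set L) j ∧ j ∉ G \ {G₀} := by
  classical
  have ha₀_lt : a₀ < G₀ := lt_of_le_of_ne ha₀G₀.2.1 ha₀G₀.1.2
  set A' := A.filter (¬ · ≤ G₀)
  have hA'_ub {y : L} (hG₀y : G₀ ≤ y) (hy : y ∈ upperBounds (A' : Set L)) :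
      y ∈ upperBounds (A : Set L) := fun a ha => by
    by_cases haG₀ : a ≤ G₀
    · exact haG₀.trans hG₀y
    · exact hy (Finset.mem_filter.mpr ⟨ha, haG₀⟩)
  rcases A'.eq_empty_or_nonempty with hA' | hA'
  · have hG₀_ub := hA'_ub le_rfl (by simp [hA'])
    obtain ⟨j, hj⟩ := exists_isLUB_of_mem_upperBounds hG₀_ub
    exact ⟨j, hj, notMem_of_mem_upperBounds_of_mem_factorsSet hanti
      (Finset.one_lt_card_iff_nontrivial.mp hcard) ha₀ ha₀G₀ hj.1 (hj.2 hG₀_ub)⟩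
  have hG₀_notMem : G₀ ∉ A' := fun h => (Finset.mem_filter.mp h).2 le_rfl
  have hB_anti : IsAntichain (· ≤ ·) (insert G₀ A' : Set L) := by
    refine (hanti.subset (Finset.coe_subset.mpr (Finset.filter_subset _ A))).insert
      (fun b hb _ => (Finset.mem_filter.mp hb).2) fun b hb _ hG₀b => ?_
    have hb := Finset.mem_filter.mp hb
    exact hanti ha₀ hb.1 (fun h => hb.2 (h ▸ ha₀_lt.le)) (ha₀_lt.le.trans hG₀b)
  have hBS : insert G₀ A' ⊆ S := Finset.insert_subset hmem fun a ha =>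
    hAS a (Finset.mem_filter.mp ha).1 (Finset.mem_filter.mp ha).2
  obtain ⟨k, hk, hkG⟩ := hS.2 _ hBS (by simpa using hB_anti)
    (by rw [Finset.card_insert_of_notMem hG₀_notMem]; exact Nat.succ_le_succ hA'.card_pos)
  rw [Finset.coe_insert] at hk
  have hG₀k : G₀ ≤ k := hk.1 (Set.mem_insert G₀ _)
  have hk_ub := hA'_ub hG₀k fun a ha => hk.1 (Set.mem_insert_of_mem G₀ ha)
  obtain ⟨j, hj⟩ := exists_isLUB_of_mem_upperBounds hk_ub
  refine ⟨j, hj, fun hjH => hkG (hG.mem_of_isLUB_pair hjH.1 hG₀ ?_ ⟨?_, ?_⟩)⟩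
  · exact fun h => hG.1 a₀ ha₀G₀.1.1 (le_bot_iff.mp (h ▸ le_inf (hj.1 ha₀) ha₀_lt.le))
  · simp [upperBounds, hj.2 hk_ub, hG₀k]
  · intro y hy
    have hjy : j ≤ y := hy (Set.mem_insert j _)
    have hG₀y : G₀ ≤ y := hy (Set.mem_insert_of_mem j rfl)
    refine hk.2 (Set.insert_subset_iff.mpr ⟨hG₀y, fun a ha => ?_⟩)
    exact (hj.1 (Finset.mem_filter.mp ha).1).trans hjy

theorem stmt12_general (L : Type*) [SemilatticeInf L] [OrderBot L] [Fintype L] [DecidableEq L]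
    (G : Set L) (G₀ : L) (hG : IsBuilding L G) (hG₀ : G₀ ∈ G)
    (F : Finset L) (hF : (F : Set L) = factorsSet (G \ {G₀}) G₀)
    (S : Finset L) (hS : IsNested G S) (hmem : G₀ ∈ S) :
    IsNested (G \ {G₀}) (S.erase G₀ ∪ F) := by
  have hF_mem {x : L} (hx : x ∈ F) : x ∈ factorsSet (G \ {G₀}) G₀ :=
    hF ▸ Finset.mem_coe.mpr hx
  refine ⟨fun x hx => ?_, fun A hA hanti hcard => ?_⟩
  · rcases Finset.mem_union.mp hx with hx | hx
    · exact ⟨hS.1 (Finset.mem_of_mem_erase hx), Finset.ne_of_mem_erase hx⟩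
    · exact (hF_mem hx).1
  by_cases hAF : ∃ a₀ ∈ A, a₀ ∈ F
  · obtain ⟨a₀, ha₀, ha₀F⟩ := hAF
    refine hS.exists_isLUB_notMem_of_mem_factorsSet hG hG₀ hmem (fun a ha haG₀ => ?_) hanti
      hcard ha₀ (hF_mem ha₀F)
    rcases Finset.mem_union.mp (hA ha) with h | h
    · exact Finset.mem_of_mem_erase h
    · exact absurd (hF_mem h).2.1 haG₀
  · push Not at hAF
    have hAS : A ⊆ S := fun a ha => (Finset.mem_union.mp (hA ha)).elim
      Finset.mem_of_mem_erase fun h => absurd h (hAF a ha)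
    obtain ⟨j, hj, hjG⟩ := hS.2 A hAS hanti hcard
    exact ⟨j, hj, fun hjH => hjG hjH.1⟩

/-- If `H = G \ {G₀}` is also a building set and `S` is `G`-nested
with `G₀ ∈ S`, then `(S \ {G₀}) ∪ F_H(G₀)` is `H`-nested. -/
theorem stmt12 (L : Type*) [SemilatticeInf L] [OrderBot L] [Fintype L] [DecidableEq L]
    (G : Set L) (G₀ : L) (hG : IsBuilding L G) (hG₀ : G₀ ∈ G)
    (hH : IsBuilding L (G \ {G₀}))
    (F : Finset L) (hF : (F : Set L) = factorsSet (G \ {G₀}) G₀)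
    (S : Finset L) (hS : IsNested G S) (hmem : G₀ ∈ S) :
    IsNested (G \ {G₀}) (S.erase G₀ ∪ F) :=
  stmt12_general L G G₀ hG hG₀ F hF S hS hmem
end

section
/- Let L be a finite meet-semilattice, G a building set in L, and H = G \ {G₀} also a building set, with G₀ minimal in G \ H. If S' is H-nested, F_H(G₀) ⊄ S', and S' ∪ F_H(G₀) is H-nested, then S' ∪ {G₀} is G-nested. -/
open scoped BigOperators

variable {L : Type*}

/-!
Write `H = G \ {G₀}` and `F = F_H(G₀)`; the building property of `H` says that `G₀` is the join
of `F` and, more precisely, that whenever `G₀` is the join of some `A ⊆ H`, each factor `f ∈ F`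
is the join of the elements of `A` below it.

Let `A ⊆ S' ∪ {G₀}` be an antichain with at least two elements. If `G₀ ∉ A`, the join `j` of `A`
exists and lies outside `H` because `S'` is `H`-nested; were `j = G₀`, every factor `f` would be
the join of the antichain `{a ∈ A | a ≤ f} ⊆ S'`, which by nestedness forces it to be a single
element, so `F ⊆ S'`, which is excluded. If `G₀ ∈ A`, replace `G₀` by `F`: the maximal elements
of `(A \ {G₀}) ∪ F` form an antichain in the `H`-nested set `S' ∪ F` with the same upper bounds
as `A`, and it has at least two elements because the elements of `A \ {G₀}` are incomparable
with `G₀ = ⋁ F`. Its join is the join of `A`, lies outside `H`, and differs from `G₀` since it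
lies above an element of `A` not below `G₀`.
-/

open Finset

theorem Finset.exists_antichain_subset_upperBounds_eq {α : Type*} [PartialOrder α]
    (B : Finset α) :
    ∃ C ⊆ B, IsAntichain (· ≤ ·) (C : Set α) ∧ upperBounds (C : Set α) = upperBounds ↑B ∧
      (B.Nonempty → C.Nonempty) := by
  classical
  refine ⟨B.filter (Maximal (· ∈ B)), filter_subset _ _, ?_, ?_, ?_⟩
  · rw [coe_filter]
    exact (setOfPred_maximal_antichain _).subset fun x hx => hx.2
  · refine le_antisymm (fun u hu b hb => ?_)
      (upperBounds_mono_set (coe_subset.2 (filter_subset (Maximal (· ∈ B)) B)))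
    obtain ⟨c, hbc, hc⟩ := B.exists_le_maximal (mem_coe.1 hb)
    exact hbc.trans (hu (by simp [hc, hc.prop]))
  · rintro ⟨b, hb⟩
    obtain ⟨c, -, hc⟩ := B.exists_le_maximal hb
    exact ⟨c, mem_filter.2 ⟨hc.prop, hc⟩⟩

theorem exists_mem_factorsSet_le [PartialOrder L] [Finite L] {H : Set L} {X a : L}
    (ha : a ∈ H) (haX : a ≤ X) : ∃ f ∈ factorsSet H X, a ≤ f := by
  obtain ⟨f, haf, hf⟩ := Finite.exists_le_maximal (p := fun h => h ∈ H ∧ h ≤ X) ⟨ha, haX⟩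
  exact ⟨f, ⟨hf.prop.1, hf.prop.2, fun h hh hhX hfh => le_antisymm hfh (hf.2 ⟨hh, hhX⟩ hfh)⟩, haf⟩

section FactorVectors

variable [PartialOrder L] [OrderBot L] {H : Set L} {X : L}

def factorTop (H : Set L) (X : L) : (g : factorsSet H X) → Set.Icc (⊥ : L) g.1 :=
  fun g => ⟨g, bot_le, le_rfl⟩

open Classical in
noncomputable def factorUnit (g : factorsSet H X) : (h : factorsSet H X) → Set.Icc (⊥ : L) h.1 :=
  Function.update (fun _ => ⟨⊥, le_rfl, bot_le⟩) g (factorTop H X g)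

theorem factorUnit_le_of_factorTop_le {g : factorsSet H X}
    {v : (h : factorsSet H X) → Set.Icc (⊥ : L) h.1} (hg : factorTop H X g ≤ v g) : factorUnit g ≤ v := by
  classical
  intro h
  by_cases hh : h = g
  · subst hh
    simpa [factorUnit] using hg
  · rw [factorUnit, Function.update_of_ne hh]
    exact (v h).2.1

theorem IsBuilding.exists_orderIso (hH : IsBuilding L H) (hX : X ≠ ⊥) :
    ∃ φ : ((g : factorsSet H X) → Set.Icc (⊥ : L) g.1) ≃o Set.Icc (⊥ : L) X,
      ∀ g, (φ (factorUnit g) : L) = g := by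
  obtain ⟨φ, hφ⟩ := hH.2 X hX
  exact ⟨φ, fun g => hφ g _ (by simp [factorUnit, factorTop])
    fun h hh => by simp [factorUnit, hh]⟩

end FactorVectors

section FactorIso

variable [SemilatticeInf L] [OrderBot L] {H : Set L} {X : L}
  (φ : ((g : factorsSet H X) → Set.Icc (⊥ : L) g.1) ≃o Set.Icc (⊥ : L) X)

theorem apply_factorTop : (φ (factorTop H X) : L) = X := by
  refine le_antisymm (φ _).2.2 ?_
  have : φ.symm ⟨X, bot_le, le_rfl⟩ ≤ factorTop H X := fun g => (φ.symm _ g).2.2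
  exact Subtype.coe_le_coe.2 (φ.symm_apply_le.1 this)

theorem symm_apply_eq_bot_of_le (hφ : ∀ g, (φ (factorUnit g) : L) = g) {x : Set.Icc (⊥ : L) X}
    {g h : factorsSet H X} (hxg : (x : L) ≤ g) (hhg : h ≠ g) : (φ.symm x h : L) = ⊥ := by
  classical
  have : φ.symm x ≤ factorUnit g := φ.symm_apply_le.2 (show (x : L) ≤ _ by rwa [hφ])
  have := this h
  rw [factorUnit, Function.update_of_ne hhg] at this
  exact le_bot_iff.1 this

theorem le_of_forall_factor_le (hφ : ∀ g, (φ (factorUnit g) : L) = g) {u : L}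
    (hu : ∀ g ∈ factorsSet H X, g ≤ u) : X ≤ u := by
  set w : Set.Icc (⊥ : L) X := ⟨u ⊓ X, bot_le, inf_le_right⟩
  have htop : factorTop H X ≤ φ.symm w := fun g => by
    have : factorUnit g ≤ φ.symm w :=
      φ.le_symm_apply.2 (show _ ≤ u ⊓ X by rw [hφ]; exact le_inf (hu g g.2) g.2.2.1)
    simpa [factorUnit] using this g
  calc X = φ (factorTop H X) := (apply_factorTop φ).symm
    _ ≤ u ⊓ X := Subtype.coe_le_coe.2 (φ.le_symm_apply.1 htop)
    _ ≤ u := inf_le_left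

/-- The vector `m` agrees with `φ⁻¹ (u ⊓ f)` at `f` and is maximal elsewhere; it dominates
`φ⁻¹ a` for every `a ∈ A` since the `f`-coordinate of `φ⁻¹ a` vanishes when `a` lies below
another factor. Hence `φ m` bounds `A`, so `m` is the top vector and `f ≤ u ⊓ f`. -/
theorem factor_le_of_isLUB (hφ : ∀ g, (φ (factorUnit g) : L) = g) {A : Set L}
    (hA : ∀ a ∈ A, ∃ g ∈ factorsSet H X, a ≤ g) (hAX : IsLUB A X) {f : L}
    (hf : f ∈ factorsSet H X) {u : L} (hu : ∀ a ∈ A, a ≤ f → a ≤ u) : f ≤ u := by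
  classical
  set k : factorsSet H X := ⟨f, hf⟩
  set w : Set.Icc (⊥ : L) X := ⟨u ⊓ f, bot_le, inf_le_right.trans hf.2.1⟩
  set m := Function.update (factorTop H X) k (φ.symm w k)
  have hAm : ∀ a ∈ A, a ≤ φ m := fun a ha => by
    have hle : φ.symm ⟨a, bot_le, hAX.1 ha⟩ ≤ m := fun h => by
      by_cases hh : h = k
      · subst hh
        simp only [m, Function.update_self]
        by_cases haf : a ≤ f
        · exact φ.symm.monotone (show a ≤ u ⊓ f from le_inf (hu a ha haf) haf) _
        · obtain ⟨g, hg, hag⟩ := hA a ha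
          have hgk : k ≠ ⟨g, hg⟩ := fun hkg =>
            haf (by rwa [show f = g from congrArg Subtype.val hkg])
          have h0 : (φ.symm ⟨a, bot_le, hAX.1 ha⟩ k : L) = ⊥ :=
            symm_apply_eq_bot_of_le φ hφ hag hgk
          change (_ : L) ≤ _
          rw [h0]
          exact bot_le
      · simp only [m, Function.update_of_ne hh]
        exact (φ.symm _ h).2.2
    exact Subtype.coe_le_coe.2 (φ.symm_apply_le.1 hle)
  have htop : factorTop H X ≤ m := by
    rw [← φ.symm_apply_eq.2 (Subtype.ext (apply_factorTop φ).symm :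
      (⟨X, bot_le, le_rfl⟩ : Set.Icc (⊥ : L) X) = φ (factorTop H X))]
    exact φ.symm_apply_le.2 (show X ≤ _ from hAX.2 hAm)
  have hkw : factorUnit k ≤ φ.symm w := factorUnit_le_of_factorTop_le (by simpa [m] using htop k)
  calc f = φ (factorUnit k) := (hφ k).symm
    _ ≤ u ⊓ f := Subtype.coe_le_coe.2 (φ.le_symm_apply.1 hkw)
    _ ≤ u := inf_le_left

end FactorIso

namespace IsBuilding

variable [SemilatticeInf L] [OrderBot L] {H : Set L}

theorem isLUB_factorsSet (hH : IsBuilding L H) (X : L) : IsLUB (factorsSet H X) X := by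
  refine ⟨fun g hg => hg.2.1, fun u hu => ?_⟩
  rcases eq_or_ne X ⊥ with rfl | hX
  · exact bot_le
  obtain ⟨φ, hφ⟩ := hH.exists_orderIso hX
  exact le_of_forall_factor_le φ hφ hu

theorem isLUB_sep_le_factor [Finite L] (hH : IsBuilding L H) {A : Set L} {X f : L}
    (hA : A ⊆ H) (hAX : IsLUB A X) (hf : f ∈ factorsSet H X) : IsLUB {a ∈ A | a ≤ f} f := by
  refine ⟨fun a ha => ha.2, fun u hu => ?_⟩
  have hX : X ≠ ⊥ := ne_bot_of_le_ne_bot (hH.1 f hf.1) hf.2.1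
  obtain ⟨φ, hφ⟩ := hH.exists_orderIso hX
  exact factor_le_of_isLUB φ hφ (fun a ha => exists_mem_factorsSet_le (hA ha) (hAX.1 ha)) hAX hf
    fun a ha haf => hu ⟨ha, haf⟩

end IsBuilding

namespace IsNested

variable {H : Set L} {S A : Finset L}

theorem mem_of_isLUB [PartialOrder L] (hS : IsNested H S) (hA : A ⊆ S)
    (hAc : IsAntichain (· ≤ ·) (A : Set L)) (hne : A.Nonempty) {j : L} (hj : IsLUB ↑A j)
    (hjH : j ∈ H) : j ∈ S := by
  obtain ⟨a, rfl⟩ | hnt := hne.exists_eq_singleton_or_nontrivial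
  · rw [coe_singleton] at hj
    exact isLUB_singleton.unique hj ▸ hA (mem_singleton_self a)
  · obtain ⟨j', hj', hj'H⟩ := hS.2 A hA hAc (one_lt_card_iff_nontrivial.2 hnt)
    exact absurd (hj.unique hj' ▸ hjH) hj'H

theorem factorsSet_subset_of_isLUB [SemilatticeInf L] [OrderBot L] [Finite L]
    (hH : IsBuilding L H) (hS : IsNested H S) (hA : A ⊆ S)
    (hAc : IsAntichain (· ≤ ·) (A : Set L)) {X : L} (hAX : IsLUB ↑A X) :
    factorsSet H X ⊆ S := by
  classical
  intro f hf
  have hlub : IsLUB ↑(A.filter (· ≤ f)) f := by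
    rw [coe_filter]
    exact hH.isLUB_sep_le_factor ((coe_subset.2 hA).trans hS.1) hAX hf
  refine hS.mem_of_isLUB ((filter_subset _ _).trans hA)
    (hAc.subset fun x hx => (mem_filter.1 hx).1) ?_ hlub hf.1
  rw [nonempty_iff_ne_empty]
  intro hempty
  rw [hempty, coe_empty, isLUB_empty_iff] at hlub
  exact hH.1 f hf.1 hlub.eq_bot

end IsNested

theorem exists_isLUB_ne_of_isNested_union [PartialOrder L] [DecidableEq L] {H : Set L}
    {S F A : Finset L} {X : L} (hFX : IsLUB ↑F X) (hS : IsNested H (S ∪ F)) (hXA : X ∈ A)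
    (hA : A ⊆ insert X S) (hAc : IsAntichain (· ≤ ·) (A : Set L)) (hcard : 2 ≤ #A) :
    ∃ j, IsLUB ↑A j ∧ j ∉ H ∧ j ≠ X := by
  obtain ⟨a, haA, haX⟩ := A.exists_mem_ne hcard X
  have hnle : ¬ a ≤ X := hAc haA hXA haX
  set B := A.erase X ∪ F
  have hB : upperBounds (B : Set L) = upperBounds ↑A := by
    conv_rhs => rw [← insert_erase hXA, coe_insert, upperBounds_insert]
    rw [coe_union, upperBounds_union, hFX.upperBounds_eq, Set.inter_comm]
  obtain ⟨C, hCB, hCc, hCub, hCne⟩ := B.exists_antichain_subset_upperBounds_eq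
  have hCS : C ⊆ S ∪ F := hCB.trans (union_subset_union_left (subset_insert_iff.1 hA))
  obtain ⟨c, rfl⟩ | hnt :=
    (hCne ⟨a, mem_union_left _ (mem_erase.2 ⟨haX, haA⟩)⟩).exists_eq_singleton_or_nontrivial
  · exfalso
    have hc : c ∈ upperBounds (A : Set L) := by simp [← hB, ← hCub]
    rcases mem_union.1 (hCB (mem_singleton_self c)) with hcA | hcF
    · exact hAc hXA (mem_of_mem_erase hcA) (ne_of_mem_erase hcA).symm (hc hXA)
    · exact hnle ((hc haA).trans (hFX.1 hcF))
  · obtain ⟨j, hj, hjH⟩ := hS.2 C hCS hCc (one_lt_card_iff_nontrivial.2 hnt)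
    have hjA : IsLUB ↑A j := by rwa [IsLUB, ← hB, ← hCub]
    exact ⟨j, hjA, hjH, fun hjX => hnle (hjX ▸ hjA.1 haA)⟩

theorem stmt13_general (L : Type*) [SemilatticeInf L] [OrderBot L] [Fintype L] [DecidableEq L]
    (G : Set L) (G₀ : L) (hG₀ : G₀ ∈ G)
    (hH : IsBuilding L (G \ {G₀}))
    (F : Finset L) (hF : (F : Set L) = factorsSet (G \ {G₀}) G₀)
    (S' : Finset L) (h1 : IsNested (G \ {G₀}) S') (h2 : ¬ F ⊆ S')
    (h3 : IsNested (G \ {G₀}) (S' ∪ F)) :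
    IsNested G (insert G₀ S') := by
  refine ⟨?_, fun A hA hAc hcard => ?_⟩
  · rw [coe_insert]
    exact Set.insert_subset hG₀ (h1.1.trans Set.sdiff_subset)
  by_cases hG₀A : G₀ ∈ A
  · obtain ⟨j, hj, hjH, hjX⟩ :=
      exists_isLUB_ne_of_isNested_union (hF ▸ hH.isLUB_factorsSet G₀) h3 hG₀A hA hAc hcard
    exact ⟨j, hj, fun hjG => hjH ⟨hjG, hjX⟩⟩
  · have hAS : A ⊆ S' := (subset_insert_iff_of_notMem hG₀A).1 hA
    obtain ⟨j, hj, hjH⟩ := h1.2 A hAS hAc hcard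
    refine ⟨j, hj, fun hjG => h2 ?_⟩
    obtain rfl : j = G₀ := by
      by_contra hne
      exact hjH ⟨hjG, hne⟩
    rw [← coe_subset, hF]
    exact h1.factorsSet_subset_of_isLUB hH hAS hAc hj

/-- If `H = G \ {G₀}` is also a building set, `S'` is `H`-nested,
`F_H(G₀) ⊄ S'`, and `S' ∪ F_H(G₀)` is `H`-nested, then `S' ∪ {G₀}` is
`G`-nested. -/
theorem stmt13 (L : Type*) [SemilatticeInf L] [OrderBot L] [Fintype L] [DecidableEq L]
    (G : Set L) (G₀ : L) (hG : IsBuilding L G) (hG₀ : G₀ ∈ G)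
    (hH : IsBuilding L (G \ {G₀}))
    (F : Finset L) (hF : (F : Set L) = factorsSet (G \ {G₀}) G₀)
    (S' : Finset L) (h1 : IsNested (G \ {G₀}) S') (h2 : ¬ F ⊆ S')
    (h3 : IsNested (G \ {G₀}) (S' ∪ F)) :
    IsNested G (insert G₀ S') :=
  stmt13_general L G G₀ hG₀ hH F hF S' h1 h2 h3
end
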